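/- Assume Λ ⊆ ℝ̂^d is a compact S-set of strict multiplicity and balayage is possible for (E, Λ), where E ⊆ ℝ^d is closed. If f ∈ C_b(ℝ^d) has supp f̂ ⊆ Λ and f vanishes on E, then f is identically zero. -/

import Mathlib

open MeasureTheory Complex Filter Topology FourierTransform RealInnerProductSpace ENNReal NNReal

noncomputable section

abbrev Rd (d : ℕ) := EuclideanSpace ℝ (Fin d)

/-- The character `x ↦ e^{-2πi x·γ}`. -/
def negChar {d : ℕ} (x γ : Rd d) : ℂ := Complex.exp (-(2 * Real.pi * Complex.I) * (⟪x, γ⟫ : ℝ))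

/-- The character `x ↦ e^{2πi x·γ}`. -/
def posChar {d : ℕ} (x γ : Rd d) : ℂ := Complex.exp ((2 * Real.pi * Complex.I) * (⟪x, γ⟫ : ℝ))

/-- Integration of a (complex-valued) function against a complex measure,
via the Jordan decompositions of its real and imaginary parts. -/
def mInt {d : ℕ} (μ : ComplexMeasure (Rd d)) (f : Rd d → ℂ) : ℂ :=
  ((∫ x, f x ∂(ComplexMeasure.re μ).toJordanDecomposition.posPart) -
    (∫ x, f x ∂(ComplexMeasure.re μ).toJordanDecomposition.negPart)) +
  Complex.I * ((∫ x, f x ∂(ComplexMeasure.im μ).toJordanDecomposition.posPart) -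
    (∫ x, f x ∂(ComplexMeasure.im μ).toJordanDecomposition.negPart))

/-- Fourier transform `μ̂(γ) = ∫ e^{-2πi x·γ} dμ(x)` of a bounded complex measure. -/
def mFourier {d : ℕ} (μ : ComplexMeasure (Rd d)) (γ : Rd d) : ℂ := mInt μ fun x => negChar x γ

/-- Inverse Fourier transform `μ̌(x) = ∫ e^{2πi x·γ} dμ(γ)`. -/
def mInvFourier {d : ℕ} (μ : ComplexMeasure (Rd d)) (x : Rd d) : ℂ := mInt μ fun γ => posChar x γ

/-- Total variation norm (up to equivalence) of a complex measure. -/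
def tvNorm {d : ℕ} (μ : ComplexMeasure (Rd d)) : ℝ :=
  (((ComplexMeasure.re μ).totalVariation Set.univ) +
    ((ComplexMeasure.im μ).totalVariation Set.univ)).toReal

/-- A complex measure is supported in the set `E`. -/
def suppIn {d : ℕ} (μ : ComplexMeasure (Rd d)) (E : Set (Rd d)) : Prop :=
  ∀ s : Set (Rd d), MeasurableSet s → s ∩ E = ∅ → μ s = 0

/-- Balayage is possible for `(E, Λ)`. -/
def BalayagePossible {d : ℕ} (E Λ : Set (Rd d)) : Prop :=
  ∀ μ : ComplexMeasure (Rd d), ∃ ν : ComplexMeasure (Rd d),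
    suppIn ν E ∧ ∀ γ ∈ Λ, mFourier ν γ = mFourier μ γ

/-- `f` has its distributional spectrum (support of `f̂`) contained in `Λ`. -/
def SpectrumIn {d : ℕ} (f : Rd d → ℂ) (Λ : Set (Rd d)) : Prop :=
  ∀ φ : SchwartzMap (Rd d) ℂ, tsupport ⇑φ ⊆ Λᶜ → ∫ x, f x * 𝓕 (⇑φ) x = 0

/-- Membership in `C(Λ)`: bounded continuous with spectrum in `Λ`. -/
def MemCLam {d : ℕ} (f : Rd d → ℂ) (Λ : Set (Rd d)) : Prop :=
  Continuous f ∧ (∃ M : ℝ, ∀ x, ‖f x‖ ≤ M) ∧ SpectrumIn f Λ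

/-- `Λ` is a set of spectral synthesis. -/
def IsSSet {d : ℕ} (Λ : Set (Rd d)) : Prop :=
  ∀ f : Rd d → ℂ, MemCLam f Λ →
    ∀ μ : ComplexMeasure (Rd d), (∀ γ ∈ Λ, mFourier μ γ = 0) → mInt μ f = 0

/-- `Λ` is a set of strict multiplicity. -/
def StrictMultiplicity {d : ℕ} (Λ : Set (Rd d)) : Prop :=
  ∃ μ : ComplexMeasure (Rd d), μ ≠ 0 ∧ suppIn μ Λ ∧
    Tendsto (fun x => ‖mInvFourier μ x‖) (Filter.cocompact (Rd d)) (nhds 0)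

/-- The balayage constant `K(E,Λ)` (as an extended nonnegative real). -/
def Kconst {d : ℕ} (E Λ : Set (Rd d)) : ℝ≥0∞ :=
  sInf {K : ℝ≥0∞ | ∀ μ : ComplexMeasure (Rd d),
    (⨅ ν : {ν : ComplexMeasure (Rd d) // suppIn ν E ∧ ∀ γ ∈ Λ, mFourier ν γ = mFourier μ γ},
      ENNReal.ofReal (tvNorm ν.1)) ≤ K * ENNReal.ofReal (tvNorm μ)}

/-- The comparison constant `J(E,Λ)` (as an extended nonnegative real). -/
def Jconst {d : ℕ} (E Λ : Set (Rd d)) : ℝ≥0∞ :=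
  sInf {J : ℝ≥0∞ | ∀ f : Rd d → ℂ, MemCLam f Λ →
    (⨆ x : Rd d, (‖f x‖₊ : ℝ≥0∞)) ≤ J * ⨆ x : E, (‖f (x : Rd d)‖₊ : ℝ≥0∞)}

/-- `E` is separated. -/
def Separated {d : ℕ} (E : Set (Rd d)) : Prop :=
  ∃ r > 0, ∀ x ∈ E, ∀ y ∈ E, x ≠ y → r ≤ dist x y

/-- The short-time Fourier transform `V_g f(x, ω)`. -/
def STFT {d : ℕ} (g f : Rd d → ℂ) (x ω : Rd d) : ℂ :=
  ∫ t, f t * (starRingEnd ℂ) (g (t - x)) * negChar t ω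

end

/-!
Sweep the Dirac mass at `x₀` onto `E`: balayage gives `ν` supported in `E` with `ν̂ = δ̂_{x₀}` on
`Λ`. Since `Λ` is an S-set and `(δ_{x₀} - ν)^` vanishes on `Λ`, we get `f x₀ = ∫ f dν`, and this
integral is zero because `ν` is null on the open set `{f ≠ 0}`, which misses `E`.
-/

namespace MeasureTheory.SignedMeasure

variable {α : Type*} [MeasurableSpace α]

noncomputable def integral (s : SignedMeasure α) (f : α → ℂ) : ℂ :=
  (∫ x, f x ∂s.toJordanDecomposition.posPart) - ∫ x, f x ∂s.toJordanDecomposition.negPart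

-- `(s - t)⁺ - (s - t)⁻ = (s⁺ - s⁻) - (t⁺ - t⁻)`, rearranged so that no measure is subtracted.
theorem posPart_add_negPart_add_posPart_sub (s t : SignedMeasure α) :
    (s - t).toJordanDecomposition.posPart + s.toJordanDecomposition.negPart
        + t.toJordanDecomposition.posPart =
      (s - t).toJordanDecomposition.negPart + s.toJordanDecomposition.posPart
        + t.toJordanDecomposition.negPart := by
  rw [← Measure.toSignedMeasure_eq_toSignedMeasure_iff]
  have hst := (s - t).toSignedMeasure_toJordanDecomposition
  have hs := s.toSignedMeasure_toJordanDecomposition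
  have ht := t.toSignedMeasure_toJordanDecomposition
  rw [JordanDecomposition.toSignedMeasure] at hst hs ht
  simp only [Measure.toSignedMeasure_add]
  rw [sub_eq_iff_eq_add.mp hst, sub_eq_iff_eq_add.mp hs, sub_eq_iff_eq_add.mp ht]
  abel

variable {f : α → ℂ}

theorem integral_sub (s t : SignedMeasure α) (hf : StronglyMeasurable f) {M : ℝ}
    (hM : ∀ x, ‖f x‖ ≤ M) : (s - t).integral f = s.integral f - t.integral f := by
  have hint : ∀ (m : Measure α) [IsFiniteMeasure m], Integrable f m := fun m _ =>
    .of_bound hf.aestronglyMeasurable M (.of_forall hM)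
  have key := congrArg (fun m => ∫ x, f x ∂m) (posPart_add_negPart_add_posPart_sub s t)
  simp only [integral_add_measure ((hint _).add_measure (hint _)) (hint _),
    integral_add_measure (hint _) (hint _)] at key
  unfold integral
  linear_combination key

theorem integral_toSignedMeasure (m : Measure α) [IsFiniteMeasure m] :
    m.toSignedMeasure.integral f = ∫ x, f x ∂m := by
  have hj : m.toSignedMeasure.toJordanDecomposition = ⟨m, 0, .zero_right⟩ :=
    toJordanDecomposition_eq (by simp [JordanDecomposition.toSignedMeasure])
  simp [integral, hj]

theorem integral_zero_measure : (0 : SignedMeasure α).integral f = 0 := by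
  simp [integral, toJordanDecomposition_zero]

theorem totalVariation_eq_zero_of_forall_subset {s : SignedMeasure α} {u : Set α}
    (hu : MeasurableSet u) (hs : ∀ t ⊆ u, MeasurableSet t → s t = 0) :
    s.totalVariation u = 0 := by
  obtain ⟨i, hi, _, _, hpos, hneg⟩ := s.toJordanDecomposition_spec
  rw [totalVariation, Measure.add_apply, hpos, hneg, toMeasureOfZeroLE_apply _ _ _ hu,
    toMeasureOfLEZero_apply _ _ _ hu]
  simp [hs _ Set.inter_subset_right (hi.inter hu), hs _ Set.inter_subset_right (hi.compl.inter hu)]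

theorem integral_eq_zero_of_forall_subset {s : SignedMeasure α} {u : Set α}
    (hu : MeasurableSet u) (hs : ∀ t ⊆ u, MeasurableSet t → s t = 0) (hf : ∀ x ∉ u, f x = 0) :
    s.integral f = 0 := by
  have htv := totalVariation_eq_zero_of_forall_subset hu hs
  rw [totalVariation, Measure.add_apply, add_eq_zero] at htv
  have hae : ∀ m : Measure α, m u = 0 → ∫ x, f x ∂m = 0 := fun m hm =>
    integral_eq_zero_of_ae <| measure_mono_null (fun x hx => by_contra fun hxu => hx (hf x hxu)) hm
  rw [integral, hae _ htv.1, hae _ htv.2, sub_zero]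

end MeasureTheory.SignedMeasure

section

variable {d : ℕ} {f : Rd d → ℂ}

theorem mInt_eq (μ : ComplexMeasure (Rd d)) (f : Rd d → ℂ) :
    mInt μ f = (ComplexMeasure.re μ).integral f + I * (ComplexMeasure.im μ).integral f :=
  rfl

theorem mInt_sub (μ ν : ComplexMeasure (Rd d)) (hf : StronglyMeasurable f) {M : ℝ}
    (hM : ∀ x, ‖f x‖ ≤ M) : mInt (μ - ν) f = mInt μ f - mInt ν f := by
  simp only [mInt_eq, map_sub, SignedMeasure.integral_sub _ _ hf hM]
  ring

theorem mInt_dirac (x₀ : Rd d) :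
    mInt ((Measure.dirac x₀).toSignedMeasure.toComplexMeasure 0) f = f x₀ := by
  rw [mInt_eq, SignedMeasure.re_toComplexMeasure, SignedMeasure.im_toComplexMeasure,
    SignedMeasure.integral_toSignedMeasure, SignedMeasure.integral_zero_measure, integral_dirac,
    mul_zero, add_zero]

theorem mInt_eq_zero_of_suppIn {ν : ComplexMeasure (Rd d)} {E : Set (Rd d)} (hν : suppIn ν E)
    (hf : Continuous f) (hfE : ∀ x ∈ E, f x = 0) : mInt ν f = 0 := by
  set u := {x | f x ≠ 0}
  have hu : MeasurableSet u := (isOpen_ne_fun hf continuous_const).measurableSet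
  have hνu : ∀ t ⊆ u, MeasurableSet t → ν t = 0 := fun t htu ht =>
    hν t ht (Set.eq_empty_of_forall_notMem fun x hx => htu hx.1 (hfE x hx.2))
  have hfu : ∀ x ∉ u, f x = 0 := fun x hx => not_not.mp hx
  rw [mInt_eq, SignedMeasure.integral_eq_zero_of_forall_subset hu
      (fun t htu ht => congrArg re (hνu t htu ht)) hfu,
    SignedMeasure.integral_eq_zero_of_forall_subset hu
      (fun t htu ht => congrArg im (hνu t htu ht)) hfu, mul_zero, add_zero]

theorem continuous_negChar (γ : Rd d) : Continuous fun x => negChar x γ := by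
  unfold negChar
  fun_prop

theorem norm_negChar_le (x γ : Rd d) : ‖negChar x γ‖ ≤ 1 := by
  simp [negChar, Complex.norm_exp, Complex.mul_re]

theorem mFourier_sub (μ ν : ComplexMeasure (Rd d)) (γ : Rd d) :
    mFourier (μ - ν) γ = mFourier μ γ - mFourier ν γ :=
  mInt_sub μ ν (continuous_negChar γ).stronglyMeasurable (norm_negChar_le · γ)

end

theorem stmt4_general {d : ℕ} (E Λ : Set (Rd d))
    (hsyn : IsSSet Λ) (hbal : BalayagePossible E Λ)
    (f : Rd d → ℂ) (hf : MemCLam f Λ) (hfE : ∀ x ∈ E, f x = 0) :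
    ∀ x : Rd d, f x = 0 := by
  intro x₀
  set δ : ComplexMeasure (Rd d) := (Measure.dirac x₀).toSignedMeasure.toComplexMeasure 0
  obtain ⟨ν, hνE, hνδ⟩ := hbal δ
  have hδν : ∀ γ ∈ Λ, mFourier (δ - ν) γ = 0 := fun γ hγ => by
    rw [mFourier_sub, hνδ γ hγ, sub_self]
  have hδν_f := hsyn f hf (δ - ν) hδν
  obtain ⟨hcont, ⟨M, hM⟩, -⟩ := hf
  rwa [mInt_sub δ ν hcont.stronglyMeasurable hM, mInt_dirac, mInt_eq_zero_of_suppIn hνE hcont hfE,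
    sub_zero] at hδν_f

/-- If `Λ` is a compact S-set of strict multiplicity, `E` is closed, balayage is possible for
`(E, Λ)`, `f ∈ C_b(ℝ^d)` has `supp f̂ ⊆ Λ`, and `f` vanishes on `E`, then `f ≡ 0`. -/
theorem stmt4 {d : ℕ} (E Λ : Set (Rd d)) (hE : IsClosed E) (hΛ : IsCompact Λ)
    (hsyn : IsSSet Λ) (hmult : StrictMultiplicity Λ) (hbal : BalayagePossible E Λ)
    (f : Rd d → ℂ) (hf : MemCLam f Λ) (hfE : ∀ x ∈ E, f x = 0) :
    ∀ x : Rd d, f x = 0 :=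
  stmt4_general E Λ hsyn hbal f hf hfE
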